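/- The twisted dual equivalence move d̃_i preserves whether the first entry exceeds the last entry: for every permutation w of {1,...,n} with n ≥ 2 and every 1 < i < n, w_1 > w_n if and only if (d̃_i(w))_1 > (d̃_i(w))_n. -/

import Mathlib

/-!  Permutations of `{1,…,n}` are modelled as `Equiv.Perm (Fin n)` with 0-based
values: the value `v : Fin n` stands for the paper's value `v+1`, and
`w.symm v` is the position of the value `v` in one-line notation.
`dmove n i` is the paper's elementary dual equivalence involution `d_{i+1}`
(so `i` ranges over `1 ≤ i` and `i + 1 < n`, matching the paper's `1 < i+1 < n`),
and `dtmove n i` is the twisted move `d̃_{i+1}`. -/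

/-- Haiman's elementary dual equivalence move: if the position of the middle
value `i` lies between the positions of `i-1` and `i+1`, do nothing; otherwise
interchange the value `i` with whichever of `i-1, i+1` is positioned further
from it. -/
def dmove (n : ℕ) (i : ℕ) (w : Equiv.Perm (Fin n)) : Equiv.Perm (Fin n) :=
  if h : 1 ≤ i ∧ i + 1 < n then
    let a : Fin n := ⟨i - 1, by omega⟩
    let b : Fin n := ⟨i, by omega⟩
    let c : Fin n := ⟨i + 1, by omega⟩
    let pa := w.symm a
    let pb := w.symm b
    let pc := w.symm c
    if (pa < pb ∧ pb < pc) ∨ (pc < pb ∧ pb < pa) then w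
    else if pb < pa ∧ pb < pc then
      (if pa < pc then Equiv.swap c b else Equiv.swap a b) * w
    else
      (if pa < pc then Equiv.swap a b else Equiv.swap c b) * w
  else w

/-- The twisted elementary dual equivalence move: if the position of the middle
value `i` lies between those of `i-1` and `i+1`, do nothing; otherwise
cyclically rotate the three values `i-1, i, i+1` so that `i` moves to the
other side of `i-1` and `i+1`, the outer two keeping their relative order. -/
def dtmove (n : ℕ) (i : ℕ) (w : Equiv.Perm (Fin n)) : Equiv.Perm (Fin n) :=
  if h : 1 ≤ i ∧ i + 1 < n then
    let a : Fin n := ⟨i - 1, by omega⟩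
    let b : Fin n := ⟨i, by omega⟩
    let c : Fin n := ⟨i + 1, by omega⟩
    let pa := w.symm a
    let pb := w.symm b
    let pc := w.symm c
    let u := if pa < pc then a else c   -- the outer value occurring first
    let v := if pa < pc then c else a   -- the outer value occurring last
    if (pa < pb ∧ pb < pc) ∨ (pc < pb ∧ pb < pa) then w
    else if pb < pa ∧ pb < pc then
      (Equiv.swap b u * Equiv.swap u v) * w
    else
      (Equiv.swap u b * Equiv.swap b v) * w
  else w

/-- The inverse descent signature: `sig n w j = +1` if the (0-based) value `j`
occurs to the left of the value `j+1` in the one-line notation of `w`, and `-1`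
otherwise.  (`sig n w (j-1)` is the paper's `σ(w)_j`.) -/
def sig (n : ℕ) (w : Equiv.Perm (Fin n)) (j : ℕ) : ℤ :=
  if h : j + 1 < n then
    if w.symm ⟨j, by omega⟩ < w.symm ⟨j + 1, h⟩ then 1 else -1
  else 1


/-! Outside the case where `i` already sits between `i-1` and `i+1`, `d̃_i` multiplies `w` on the
left by a 3-cycle of the values `i-1, i, i+1`. These values form an interval, so the cycle
changes no comparison except one between two of them; and the first and last entries of `w`
can both be among them only as the first and last of the three in `w`. Writing `u, v` for the
outer values in the order they occur, the rotations are `i u v ↦ u v i` and `u v i ↦ i u v`,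
and in both the first entry exceeds the last exactly when `u = i+1`. -/
section OrdConnected

variable {α : Type*} [LinearOrder α] {S : Set α}

theorem Set.OrdConnected.lt_iff_lt_of_notMem (hS : S.OrdConnected) {z s t : α} (hz : z ∉ S)
    (hs : s ∈ S) (ht : t ∈ S) : s < z ↔ t < z := by
  suffices key : ∀ s t, s ∈ S → t ∈ S → s < z → t < z from
    ⟨key s t hs ht, key t s ht hs⟩
  intro s t hs ht hsz
  by_contra htz
  exact hz (hS.out hs ht ⟨hsz.le, not_lt.mp htz⟩)

theorem Set.OrdConnected.lt_iff_lt_of_notMem' (hS : S.OrdConnected) {z s t : α} (hz : z ∉ S)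
    (hs : s ∈ S) (ht : t ∈ S) : z < s ↔ z < t := by
  suffices key : ∀ s t, s ∈ S → t ∈ S → z < s → z < t from
    ⟨key s t hs ht, key t s ht hs⟩
  intro s t hs ht hzs
  by_contra hzt
  exact hz (hS.out ht hs ⟨not_lt.mp hzt, hzs.le⟩)

theorem Equiv.Perm.lt_iff_apply_lt_apply_of_ordConnected (hS : S.OrdConnected)
    {σ : Equiv.Perm α} (hfix : ∀ z ∉ S, σ z = z) {x y : α}
    (hxy : x ∈ S → y ∈ S → (x < y ↔ σ x < σ y)) : x < y ↔ σ x < σ y := by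
  have hmaps : ∀ z ∈ S, σ z ∈ S := fun z hz => by
    by_contra h
    rw [σ.injective (hfix _ h)] at h
    exact h hz
  by_cases hx : x ∈ S <;> by_cases hy : y ∈ S
  · exact hxy hx hy
  · rw [hfix y hy]
    exact hS.lt_iff_lt_of_notMem hy hx (hmaps x hx)
  · rw [hfix x hx]
    exact hS.lt_iff_lt_of_notMem' hx hy (hmaps y hy)
  · rw [hfix x hx, hfix y hy]

end OrdConnected

namespace Equiv.Perm

variable {n : ℕ} {w : Equiv.Perm (Fin n)}

theorem ne_apply_zero_of_symm_lt {x y : Fin n} (h : w.symm y < w.symm x) (h0 : 0 < n) :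
    x ≠ w ⟨0, h0⟩ := by
  rintro rfl
  simp only [symm_apply_apply, Fin.lt_def] at h
  omega

theorem ne_apply_last_of_lt_symm {x y : Fin n} (h : w.symm x < w.symm y) (hn : n - 1 < n) :
    x ≠ w ⟨n - 1, hn⟩ := by
  rintro rfl
  simp only [symm_apply_apply, Fin.lt_def] at h
  omega

theorem last_lt_first_iff_of_ordConnected {S : Set (Fin n)} (hS : S.OrdConnected)
    {σ : Equiv.Perm (Fin n)} (hfix : ∀ z ∉ S, σ z = z) {x y : Fin n}
    (hx : ∀ z ∈ S, z ≠ x → w.symm x < w.symm z)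
    (hy : ∀ z ∈ S, z ≠ y → w.symm z < w.symm y)
    (hkey : y < x ↔ σ y < σ x) (h0 : 0 < n) :
    w ⟨n - 1, by omega⟩ < w ⟨0, h0⟩ ↔
      (σ * w) ⟨n - 1, by omega⟩ < (σ * w) ⟨0, h0⟩ := by
  refine lt_iff_apply_lt_apply_of_ordConnected hS hfix fun hlast hfirst => ?_
  have hfirst : w ⟨0, h0⟩ = x := by
    by_contra hne
    exact ne_apply_zero_of_symm_lt (hx _ hfirst hne) h0 rfl
  have hlast : w ⟨n - 1, by omega⟩ = y := by
    by_contra hne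
    exact ne_apply_last_of_lt_symm (hy _ hlast hne) (by omega) rfl
  rw [hfirst, hlast]
  exact hkey

end Equiv.Perm

namespace Equiv

variable {α : Type*} [DecidableEq α] {p q r : α}

theorem swap_mul_swap_apply_of_notMem {S : Set α} (hp : p ∈ S) (hq : q ∈ S) (hr : r ∈ S)
    {z : α} (hz : z ∉ S) : (swap p q * swap q r) z = z := by
  have hne : ∀ {t}, t ∈ S → z ≠ t := fun ht h => hz (h ▸ ht)
  rw [Perm.mul_apply, swap_apply_of_ne_of_ne (hne hq) (hne hr),
    swap_apply_of_ne_of_ne (hne hp) (hne hq)]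

theorem swap_mul_swap_apply_left (hpq : p ≠ q) (hpr : p ≠ r) : (swap p q * swap q r) p = q := by
  rw [Perm.mul_apply, swap_apply_of_ne_of_ne hpq hpr, swap_apply_left]

theorem swap_mul_swap_apply_middle (hqr : q ≠ r) (hpr : p ≠ r) :
    (swap p q * swap q r) q = r := by
  rw [Perm.mul_apply, swap_apply_left, swap_apply_of_ne_of_ne hpr.symm hqr.symm]

theorem swap_mul_swap_apply_right : (swap p q * swap q r) r = p := by
  rw [Perm.mul_apply, swap_apply_right, swap_apply_right]

end Equiv

section ConsecutiveTriple

variable {n : ℕ} {a b c u v : Fin n}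

theorem Fin.eq_or_eq_or_eq_of_mem_Icc (hab : a.val + 1 = b.val) (hbc : b.val + 1 = c.val)
    (huv : u = a ∧ v = c ∨ u = c ∧ v = a) {z : Fin n} (hz : z ∈ Set.Icc a c) :
    z = u ∨ z = b ∨ z = v := by
  simp only [Set.mem_Icc, Fin.le_def] at hz
  rcases huv with ⟨rfl, rfl⟩ | ⟨rfl, rfl⟩ <;> simp only [Fin.ext_iff] <;> omega

theorem Fin.outer_ne_middle (hab : a.val + 1 = b.val) (hbc : b.val + 1 = c.val)
    (huv : u = a ∧ v = c ∨ u = c ∧ v = a) : u ≠ b ∧ v ≠ b ∧ u ≠ v := by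
  rcases huv with ⟨rfl, rfl⟩ | ⟨rfl, rfl⟩ <;> simp only [ne_eq, Fin.ext_iff] <;> omega

theorem Fin.outer_mem_Icc (hab : a.val + 1 = b.val) (hbc : b.val + 1 = c.val)
    (huv : u = a ∧ v = c ∨ u = c ∧ v = a) :
    u ∈ Set.Icc a c ∧ b ∈ Set.Icc a c ∧ v ∈ Set.Icc a c := by
  rcases huv with ⟨rfl, rfl⟩ | ⟨rfl, rfl⟩ <;> simp only [Set.mem_Icc, Fin.le_def] <;> omega

theorem Fin.lt_middle_iff_middle_lt (hab : a.val + 1 = b.val) (hbc : b.val + 1 = c.val)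
    (huv : u = a ∧ v = c ∨ u = c ∧ v = a) : v < b ↔ b < u := by
  rcases huv with ⟨rfl, rfl⟩ | ⟨rfl, rfl⟩ <;> simp only [Fin.lt_def] <;> omega

end ConsecutiveTriple

section Rotation

open Equiv Perm

variable {n : ℕ} {w : Perm (Fin n)} {a b c u v : Fin n}

theorem last_lt_first_iff_of_middle_first (hab : a.val + 1 = b.val) (hbc : b.val + 1 = c.val)
    (huv : u = a ∧ v = c ∨ u = c ∧ v = a) (hbu : w.symm b < w.symm u)
    (hu_v : w.symm u < w.symm v) (h0 : 0 < n) :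
    w ⟨n - 1, by omega⟩ < w ⟨0, h0⟩ ↔
      (swap b u * swap u v * w) ⟨n - 1, by omega⟩ < (swap b u * swap u v * w) ⟨0, h0⟩ := by
  obtain ⟨hub, hvb, hu_ne_v⟩ := Fin.outer_ne_middle hab hbc huv
  obtain ⟨hu, hb, hv⟩ := Fin.outer_mem_Icc hab hbc huv
  refine last_lt_first_iff_of_ordConnected Set.ordConnected_Icc
    (fun _ => swap_mul_swap_apply_of_notMem hb hu hv) (x := b) (y := v) ?_ ?_ ?_ h0
  · intro z hz hzb
    rcases Fin.eq_or_eq_or_eq_of_mem_Icc hab hbc huv hz with rfl | rfl | rfl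
    · exact hbu
    · exact absurd rfl hzb
    · exact hbu.trans hu_v
  · intro z hz hzv
    rcases Fin.eq_or_eq_or_eq_of_mem_Icc hab hbc huv hz with rfl | rfl | rfl
    · exact hu_v
    · exact hbu.trans hu_v
    · exact absurd rfl hzv
  · rw [swap_mul_swap_apply_right, swap_mul_swap_apply_left hub.symm hvb.symm]
    exact Fin.lt_middle_iff_middle_lt hab hbc huv

theorem last_lt_first_iff_of_middle_last (hab : a.val + 1 = b.val) (hbc : b.val + 1 = c.val)
    (huv : u = a ∧ v = c ∨ u = c ∧ v = a) (hu_v : w.symm u < w.symm v)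
    (hvb : w.symm v < w.symm b) (h0 : 0 < n) :
    w ⟨n - 1, by omega⟩ < w ⟨0, h0⟩ ↔
      (swap u b * swap b v * w) ⟨n - 1, by omega⟩ < (swap u b * swap b v * w) ⟨0, h0⟩ := by
  obtain ⟨hub, hv_ne_b, hu_ne_v⟩ := Fin.outer_ne_middle hab hbc huv
  obtain ⟨hu, hb, hv⟩ := Fin.outer_mem_Icc hab hbc huv
  refine last_lt_first_iff_of_ordConnected Set.ordConnected_Icc
    (fun _ => swap_mul_swap_apply_of_notMem hu hb hv) (x := u) (y := b) ?_ ?_ ?_ h0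
  · intro z hz hzu
    rcases Fin.eq_or_eq_or_eq_of_mem_Icc hab hbc huv hz with rfl | rfl | rfl
    · exact absurd rfl hzu
    · exact hu_v.trans hvb
    · exact hu_v
  · intro z hz hzb
    rcases Fin.eq_or_eq_or_eq_of_mem_Icc hab hbc huv hz with rfl | rfl | rfl
    · exact hu_v.trans hvb
    · exact absurd rfl hzb
    · exact hvb
  · rw [swap_mul_swap_apply_middle hv_ne_b.symm hu_ne_v, swap_mul_swap_apply_left hub hu_ne_v]
    exact (Fin.lt_middle_iff_middle_lt hab hbc huv).symm

end Rotation

/-- the twisted dual equivalence move `d̃_i` preserves whether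
the first entry exceeds the last entry of the one-line notation. -/
theorem dtmove_first_last (n i : ℕ) (hi : 1 ≤ i) (hin : i + 1 < n)
    (w : Equiv.Perm (Fin n)) :
    (w ⟨n - 1, by omega⟩ < w ⟨0, by omega⟩ ↔
      (dtmove n i w) ⟨n - 1, by omega⟩ < (dtmove n i w) ⟨0, by omega⟩) := by
  have hpred : i - 1 + 1 = i := by omega
  have hne : ∀ {j k : ℕ} (hj : j < n) (hk : k < n), j ≠ k →
      w.symm ⟨j, hj⟩ ≠ w.symm ⟨k, hk⟩ :=
    fun _ _ h => w.symm.injective.ne (Fin.ne_of_val_ne h)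
  have hpab := hne (j := i - 1) (k := i) (by omega) (by omega) (by omega)
  have hpbc := hne (j := i) (k := i + 1) (by omega) hin (by omega)
  have hpac := hne (j := i - 1) (k := i + 1) (by omega) hin (by omega)
  unfold dtmove
  rw [dif_pos ⟨hi, hin⟩]
  dsimp only
  split_ifs with hmid hmin hac hac
  · rfl
  · exact last_lt_first_iff_of_middle_first hpred rfl (.inl ⟨rfl, rfl⟩) hmin.1 hac (by omega)
  · exact last_lt_first_iff_of_middle_first hpred rfl (.inr ⟨rfl, rfl⟩) hmin.2 (by order)
      (by omega)
  · exact last_lt_first_iff_of_middle_last hpred rfl (.inl ⟨rfl, rfl⟩) hac (by grind)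
      (by omega)
  · exact last_lt_first_iff_of_middle_last hpred rfl (.inr ⟨rfl, rfl⟩) (by order) (by grind)
      (by omega)
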